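/- arXiv:2304.13365 — 3 statements merged into one kernel-verified Lean document; each statement's English description precedes it below -/
import Mathlib

section
/- Let n, m be positive natural numbers, A an invertible real n×n matrix, B a real m×n matrix, S a real m×m matrix such that B·A⁻¹·Bᵀ + S is invertible, and A_p any real m×m matrix. Let f : [0,∞) → ℝⁿ be continuously differentiable and g : [0,∞) → ℝᵐ be continuous, and let p₀ ∈ ℝᵐ be given; set u₀ := A⁻¹(f(0) − Bᵀ p₀). Then there exists a unique pair of continuously differentiable functions u : [0,∞) → ℝⁿ and p : [0,∞) → ℝᵐ with u(0) = u₀, p(0) = p₀ such that for all t ≥ 0: A·u(t) + Bᵀ·p(t) = f(t) and B·u'(t) − S·p'(t) − A_p·p(t) = −g(t). -/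
open Matrix Set NormedSpace
set_option synthInstance.maxHeartbeats 1000000
set_option maxHeartbeats 1000000

theorem my_ode_exist {E : Type*} [NormedAddCommGroup E] [NormedSpace ℝ E] [CompleteSpace E]
    (Cl : E →L[ℝ] E) (h : ℝ → E) (hh : Continuous h) (p₀ : E) :
    ∃ p : ℝ → E, ContDiff ℝ 1 p ∧ p 0 = p₀ ∧ ∀ t, HasDerivAt p (Cl (p t) + h t) t := by
  letI : NormedAlgebra ℚ (E →L[ℝ] E) := NormedAlgebra.restrictScalars ℚ ℝ _
  have hexp1 : ∀ t : ℝ, exp (t • Cl) * exp ((-t) • Cl) = 1 := by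
    intro t
    rw [← NormedSpace.exp_add_of_commute (((Commute.refl Cl).smul_left t).smul_right (-t)),
      ← add_smul, add_neg_cancel, zero_smul, NormedSpace.exp_zero]
  set w : ℝ → E := fun s => exp ((-s) • Cl) (h s) with hw
  have hwc : Continuous w := by
    apply Continuous.clm_apply _ hh
    exact NormedSpace.exp_continuous.comp (continuous_neg.smul continuous_const)
  set q : ℝ → E := fun t => ∫ s in (0:ℝ)..t, w s with hq
  have hqd : ∀ t, HasDerivAt q (w t) t := fun t =>
    intervalIntegral.integral_hasDerivAt_right (hwc.intervalIntegrable 0 t)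
      (hwc.stronglyMeasurable.stronglyMeasurableAtFilter) hwc.continuousAt
  set p : ℝ → E := fun t => exp (t • Cl) (p₀ + q t) with hp
  have hpd : ∀ t, HasDerivAt p (Cl (p t) + h t) t := by
    intro t
    have h1 : HasDerivAt (fun u : ℝ => exp (u • Cl)) (Cl * exp (t • Cl)) t :=
      hasDerivAt_exp_smul_const' Cl t
    have h2 : HasDerivAt (fun u : ℝ => p₀ + q u) (w t) t := (hqd t).const_add p₀
    have h3 := h1.clm_apply h2
    convert h3 using 1
    rw [ContinuousLinearMap.mul_apply]
    congr 1
    show h t = _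
    rw [hw]
    have := congrArg (fun (L : E →L[ℝ] E) => L (h t)) (hexp1 t)
    simpa [ContinuousLinearMap.mul_apply] using this.symm
  refine ⟨p, ?_, by simp [hp, hq, NormedSpace.exp_zero], hpd⟩
  rw [contDiff_one_iff_deriv]
  have hpdiff : Differentiable ℝ p := fun t => (hpd t).differentiableAt
  refine ⟨hpdiff, ?_⟩
  have : deriv p = fun t => Cl (p t) + h t := funext fun t => (hpd t).deriv
  rw [this]
  exact (Cl.continuous.comp hpdiff.continuous).add hh

theorem my_ode_unique {E : Type*} [NormedAddCommGroup E] [NormedSpace ℝ E] [CompleteSpace E]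
    (Cl : E →L[ℝ] E) (q : ℝ → E)
    (hq : ∀ t ∈ Ici (0:ℝ), HasDerivWithinAt q (Cl (q t)) (Ici 0) t)
    (h0 : q 0 = 0) : ∀ t ∈ Ici (0:ℝ), q t = 0 := by
  letI : NormedAlgebra ℚ (E →L[ℝ] E) := NormedAlgebra.restrictScalars ℚ ℝ _
  have hexp1 : ∀ t : ℝ, exp (t • Cl) * exp ((-t) • Cl) = 1 := by
    intro t
    rw [← NormedSpace.exp_add_of_commute (((Commute.refl Cl).smul_left t).smul_right (-t)),
      ← add_smul, add_neg_cancel, zero_smul, NormedSpace.exp_zero]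
  intro t ht
  set r : ℝ → E := fun s => exp ((-s) • Cl) (q s) with hr
  have hrd : ∀ s ∈ Ici (0:ℝ), HasDerivWithinAt r 0 (Ici 0) s := by
    intro s hs
    have h1 : HasDerivAt (fun u : ℝ => exp ((-u) • Cl))
        ((-1 : ℝ) • (Cl * exp ((-s) • Cl))) s := by
      have := (hasDerivAt_exp_smul_const' (𝕂 := ℝ) Cl (-s)).scomp s (hasDerivAt_neg s)
      simpa [Function.comp_def] using this
    have h3 := h1.hasDerivWithinAt.clm_apply (hq s hs)
    convert h3 using 1
    have hc : Commute Cl (exp ((-s) • Cl)) :=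
      Commute.exp_right ((Commute.refl Cl).smul_right (-s))
    have : exp ((-s) • Cl) (Cl (q s)) = (Cl * exp ((-s) • Cl)) (q s) := by
      rw [← ContinuousLinearMap.mul_apply, hc.eq]
    rw [this]
    simp
  have hdiff : DifferentiableOn ℝ r (Ici 0) := fun s hs => (hrd s hs).differentiableWithinAt
  have hfz : ∀ s ∈ Ici (0:ℝ), fderivWithin ℝ r (Ici 0) s = 0 := by
    intro s hs
    have := (hrd s hs).hasFDerivWithinAt.fderivWithin ((uniqueDiffOn_Ici 0) s hs)
    rw [this]
    exact ContinuousLinearMap.ext fun v => by simp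
  have hconst := (convex_Ici (0:ℝ)).is_const_of_fderivWithin_eq_zero hdiff hfz ht self_mem_Ici
  have hr0 : r 0 = 0 := by simp [hr, h0]
  have hrt : r t = 0 := hconst.trans hr0
  have := congrArg (fun v => exp (t • Cl) v) hrt
  simp only [hr] at this
  rw [← ContinuousLinearMap.mul_apply, hexp1 t] at this
  simpa using this

/-- **Well-posedness of the semidiscrete system in matrix form.**
Given an invertible `n × n` matrix `A`, an `m × n` matrix `B`, an `m × m` matrix `S`
with `B·A⁻¹·Bᵀ + S` invertible, an arbitrary `m × m` matrix `Ap`, a `C¹` right-hand side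
`f` on `[0, ∞)`, a continuous `g` on `[0, ∞)` and initial pressure `p₀`, with
`u₀ := A⁻¹ (f 0 − Bᵀ p₀)`, there is a unique pair of continuously differentiable
functions `(u, p)` on `[0, ∞)` with `u 0 = u₀`, `p 0 = p₀` satisfying
`A u(t) + Bᵀ p(t) = f(t)` and `B u'(t) − S p'(t) − Ap p(t) = −g(t)` for all `t ≥ 0`. -/
theorem semidiscrete_wellposedness
    (n m : ℕ) (hn : 0 < n) (hm : 0 < m)
    (A : Matrix (Fin n) (Fin n) ℝ) (B : Matrix (Fin m) (Fin n) ℝ)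
    (S Ap : Matrix (Fin m) (Fin m) ℝ)
    (hA : IsUnit A)
    (hSchur : IsUnit (B * A⁻¹ * Bᵀ + S))
    (f : ℝ → Fin n → ℝ) (g : ℝ → Fin m → ℝ)
    (hf : ContDiffOn ℝ 1 f (Ici (0 : ℝ)))
    (hg : ContinuousOn g (Ici (0 : ℝ)))
    (p₀ : Fin m → ℝ) :
    ∃ (u : ℝ → Fin n → ℝ) (p : ℝ → Fin m → ℝ),
      (ContDiffOn ℝ 1 u (Ici (0 : ℝ)) ∧ ContDiffOn ℝ 1 p (Ici (0 : ℝ)) ∧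
        u 0 = A⁻¹.mulVec (f 0 - Bᵀ.mulVec p₀) ∧ p 0 = p₀ ∧
        ∀ t : ℝ, 0 ≤ t →
          A.mulVec (u t) + Bᵀ.mulVec (p t) = f t ∧
          B.mulVec (derivWithin u (Ici (0 : ℝ)) t)
            - S.mulVec (derivWithin p (Ici (0 : ℝ)) t)
            - Ap.mulVec (p t) = -(g t)) ∧
      (∀ (u' : ℝ → Fin n → ℝ) (p' : ℝ → Fin m → ℝ),
        (ContDiffOn ℝ 1 u' (Ici (0 : ℝ)) ∧ ContDiffOn ℝ 1 p' (Ici (0 : ℝ)) ∧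
          u' 0 = A⁻¹.mulVec (f 0 - Bᵀ.mulVec p₀) ∧ p' 0 = p₀ ∧
          ∀ t : ℝ, 0 ≤ t →
            A.mulVec (u' t) + Bᵀ.mulVec (p' t) = f t ∧
            B.mulVec (derivWithin u' (Ici (0 : ℝ)) t)
              - S.mulVec (derivWithin p' (Ici (0 : ℝ)) t)
              - Ap.mulVec (p' t) = -(g t)) →
        ∀ t : ℝ, 0 ≤ t → u' t = u t ∧ p' t = p t) := by
  classical
  have hAdet : IsUnit A.det := (Matrix.isUnit_iff_isUnit_det A).mp hA
  have hAl : A⁻¹ * A = 1 := Matrix.nonsing_inv_mul A hAdet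
  have hAr : A * A⁻¹ = 1 := Matrix.mul_nonsing_inv A hAdet
  set T : Matrix (Fin m) (Fin m) ℝ := B * A⁻¹ * Bᵀ + S with hTdef
  have hTdet : IsUnit T.det := (Matrix.isUnit_iff_isUnit_det T).mp hSchur
  have hTl : T⁻¹ * T = 1 := Matrix.nonsing_inv_mul T hTdet
  have hTr : T * T⁻¹ = 1 := Matrix.mul_nonsing_inv T hTdet
  set C : Matrix (Fin m) (Fin m) ℝ := -(T⁻¹ * Ap) with hCdef
  set Cl : (Fin m → ℝ) →L[ℝ] (Fin m → ℝ) := (Matrix.mulVecLin C).toContinuousLinearMap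
    with hCldef
  have hClapp : ∀ x, Cl x = C.mulVec x := fun x => by simp [hCldef]
  set f' : ℝ → Fin n → ℝ := derivWithin f (Ici (0:ℝ)) with hf'def
  have hf'c : ContinuousOn f' (Ici 0) :=
    hf.continuousOn_derivWithin (uniqueDiffOn_Ici 0) le_rfl
  -- the inhomogeneity, extended to all of ℝ
  set h : ℝ → Fin m → ℝ :=
    fun s => T⁻¹.mulVec ((B * A⁻¹).mulVec (f' (max s 0)) + g (max s 0)) with hhdef
  have hmax : Continuous fun s : ℝ => max s 0 := continuous_id.max continuous_const
  have hmaxmem : ∀ s : ℝ, max s 0 ∈ Ici (0:ℝ) := fun s => le_max_right s 0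
  have contMV : ∀ {k l : ℕ} (M : Matrix (Fin k) (Fin l) ℝ) {v : ℝ → Fin l → ℝ},
      Continuous v → Continuous fun s => M.mulVec (v s) := by
    intro k l M v hv
    exact ((Matrix.mulVecLin M).continuous_of_finiteDimensional).comp hv
  have hhc : Continuous h := by
    apply contMV
    apply Continuous.add
    · exact contMV _ (hf'c.comp_continuous hmax hmaxmem)
    · exact hg.comp_continuous hmax hmaxmem
  obtain ⟨p, hpC, hp0, hpd⟩ := my_ode_exist Cl h hhc p₀
  -- helpers for mulVec calculus
  have hdMV : ∀ {k l : ℕ} (M : Matrix (Fin k) (Fin l) ℝ) {v : ℝ → Fin l → ℝ}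
      {v' : Fin l → ℝ} {s : Set ℝ} {t : ℝ}, HasDerivWithinAt v v' s t →
      HasDerivWithinAt (fun t => M.mulVec (v t)) (M.mulVec v') s t := by
    intro k l M v v' s t hv
    have := ((Matrix.mulVecLin M).toContinuousLinearMap.hasFDerivAt).comp_hasDerivWithinAt t hv
    exact this
  have cdMV : ∀ {k l : ℕ} (M : Matrix (Fin k) (Fin l) ℝ) {v : ℝ → Fin l → ℝ},
      ContDiffOn ℝ 1 v (Ici 0) → ContDiffOn ℝ 1 (fun t => M.mulVec (v t)) (Ici 0) := by
    intro k l M v hv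
    exact ((Matrix.mulVecLin M).toContinuousLinearMap.contDiff.comp_contDiffOn hv)
  -- definition of u
  set u : ℝ → Fin n → ℝ := fun t => A⁻¹.mulVec (f t - Bᵀ.mulVec (p t)) with hudef
  have huC : ContDiffOn ℝ 1 u (Ici 0) := cdMV _ (hf.sub (cdMV _ hpC.contDiffOn))
  -- derivatives of p and u within Ici 0
  have hpW : ∀ t, HasDerivWithinAt p (Cl (p t) + h t) (Ici 0) t :=
    fun t => (hpd t).hasDerivWithinAt
  have hdp : ∀ t ∈ Ici (0:ℝ), derivWithin p (Ici 0) t = Cl (p t) + h t :=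
    fun t ht => (hpW t).derivWithin ((uniqueDiffOn_Ici 0) t ht)
  have hfW : ∀ t ∈ Ici (0:ℝ), HasDerivWithinAt f (f' t) (Ici 0) t := by
    intro t ht
    exact ((hf.differentiableOn one_ne_zero) t ht).hasDerivWithinAt
  have huW : ∀ t ∈ Ici (0:ℝ), HasDerivWithinAt u
      (A⁻¹.mulVec (f' t - Bᵀ.mulVec (Cl (p t) + h t))) (Ici 0) t := by
    intro t ht
    exact hdMV _ (((hfW t ht).sub (hdMV _ (hpW t))))
  have hdu : ∀ t ∈ Ici (0:ℝ), derivWithin u (Ici 0) t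
      = A⁻¹.mulVec (f' t - Bᵀ.mulVec (Cl (p t) + h t)) :=
    fun t ht => (huW t ht).derivWithin ((uniqueDiffOn_Ici 0) t ht)
  -- the key linear algebra computation
  have key : ∀ (pt : Fin m → ℝ) (ft : Fin n → ℝ) (gt : Fin m → ℝ),
      B.mulVec (A⁻¹.mulVec (ft - Bᵀ.mulVec (C.mulVec pt
          + T⁻¹.mulVec ((B * A⁻¹).mulVec ft + gt))))
        - S.mulVec (C.mulVec pt + T⁻¹.mulVec ((B * A⁻¹).mulVec ft + gt))
        - Ap.mulVec pt = -gt := by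
    intro pt ft gt
    set D : Fin m → ℝ := C.mulVec pt + T⁻¹.mulVec ((B * A⁻¹).mulVec ft + gt) with hD
    have e2 : (B * A⁻¹ * Bᵀ).mulVec D + S.mulVec D
        = -(Ap.mulVec pt) + ((B * A⁻¹).mulVec ft + gt) := by
      rw [← Matrix.add_mulVec, ← hTdef, hD, Matrix.mulVec_add, Matrix.mulVec_mulVec,
        Matrix.mulVec_mulVec, hCdef, Matrix.mul_neg, ← Matrix.mul_assoc, hTr,
        Matrix.one_mul, Matrix.one_mulVec, Matrix.neg_mulVec]
    have e1 : B.mulVec (A⁻¹.mulVec (ft - Bᵀ.mulVec D))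
        = (B * A⁻¹).mulVec ft - (B * A⁻¹ * Bᵀ).mulVec D := by
      rw [Matrix.mulVec_mulVec, Matrix.mulVec_sub, Matrix.mulVec_mulVec]
    linear_combination e1 - e2
  refine ⟨u, p, ⟨huC, hpC.contDiffOn, by rw [hudef]; simp [hp0], hp0, ?_⟩, ?_⟩
  · -- the two equations
    intro t ht
    have hmax_t : max t 0 = t := max_eq_left ht
    constructor
    · rw [hudef]
      simp only []
      rw [Matrix.mulVec_mulVec, hAr, Matrix.one_mulVec, sub_add_cancel]
    · rw [hdu t ht, hdp t ht, hClapp]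
      have hht : h t = T⁻¹.mulVec ((B * A⁻¹).mulVec (f' t) + g t) := by
        rw [hhdef]; simp only [hmax_t]
      rw [hht]
      exact key (p t) (f' t) (g t)
  · -- uniqueness
    rintro u2 p2 ⟨hu2C, hp2C, hu20, hp20, heqs⟩ t ht
    have hu2eq : ∀ s ∈ Ici (0:ℝ), u2 s = A⁻¹.mulVec (f s - Bᵀ.mulVec (p2 s)) := by
      intro s hs
      have h1 := (heqs s hs).1
      have := congrArg (A⁻¹.mulVec) h1
      rw [Matrix.mulVec_add, Matrix.mulVec_mulVec, hAl, Matrix.one_mulVec] at this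
      rw [Matrix.mulVec_sub]
      rw [← this, Matrix.mulVec_mulVec]
      abel
    set dp2 : ℝ → Fin m → ℝ := derivWithin p2 (Ici 0) with hdp2def
    have hp2W : ∀ s ∈ Ici (0:ℝ), HasDerivWithinAt p2 (dp2 s) (Ici 0) s :=
      fun s hs => ((hp2C.differentiableOn one_ne_zero) s hs).hasDerivWithinAt
    have hdu2 : ∀ s ∈ Ici (0:ℝ), derivWithin u2 (Ici 0) s
        = A⁻¹.mulVec (f' s - Bᵀ.mulVec (dp2 s)) := by
      intro s hs
      have hcongr : derivWithin u2 (Ici 0) s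
          = derivWithin (fun r => A⁻¹.mulVec (f r - Bᵀ.mulVec (p2 r))) (Ici 0) s :=
        derivWithin_congr hu2eq (hu2eq s hs)
      rw [hcongr]
      exact (hdMV _ ((hfW s hs).sub (hdMV _ (hp2W s hs)))).derivWithin
        ((uniqueDiffOn_Ici 0) s hs)
    -- p2 satisfies the same ODE
    have hode2 : ∀ s ∈ Ici (0:ℝ), dp2 s = Cl (p2 s) + h s := by
      intro s hs
      have h2 := (heqs s hs).2
      rw [hdu2 s hs] at h2
      have hmax_s : max s 0 = s := max_eq_left hs
      have hht : h s = T⁻¹.mulVec ((B * A⁻¹).mulVec (f' s) + g s) := by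
        rw [hhdef]; simp only [hmax_s]
      have hkey := key (p2 s) (f' s) (g s)
      -- subtract: both dp2 s and (C p2 + h) satisfy the same affine equation with
      -- invertible matrix T
      have heq : B.mulVec (A⁻¹.mulVec (f' s - Bᵀ.mulVec (dp2 s))) - S.mulVec (dp2 s)
          = B.mulVec (A⁻¹.mulVec (f' s - Bᵀ.mulVec (C.mulVec (p2 s)
              + T⁻¹.mulVec ((B * A⁻¹).mulVec (f' s) + g s))))
            - S.mulVec (C.mulVec (p2 s)
              + T⁻¹.mulVec ((B * A⁻¹).mulVec (f' s) + g s)) := by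
        have := h2.trans hkey.symm
        have := congrArg (fun x => x + Ap.mulVec (p2 s)) this
        simpa [sub_add_cancel] using this
      -- from heq deduce T (dp2 s) = T (C p2 + h)
      set D2 : Fin m → ℝ := C.mulVec (p2 s) + T⁻¹.mulVec ((B * A⁻¹).mulVec (f' s) + g s)
        with hD2
      have expand : ∀ v : Fin m → ℝ, B.mulVec (A⁻¹.mulVec (f' s - Bᵀ.mulVec v))
          - S.mulVec v = (B * A⁻¹).mulVec (f' s) - T.mulVec v := by
        intro v
        rw [Matrix.mulVec_mulVec, Matrix.mulVec_sub, Matrix.mulVec_mulVec, hTdef,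
          Matrix.add_mulVec, sub_sub]
      rw [expand, expand] at heq
      have hT2 : T.mulVec (dp2 s) = T.mulVec D2 := by
        have := congrArg (fun x => (B * A⁻¹).mulVec (f' s) - x) heq
        simpa using this
      have := congrArg (T⁻¹.mulVec) hT2
      rw [Matrix.mulVec_mulVec, Matrix.mulVec_mulVec, hTl, Matrix.one_mulVec,
        Matrix.one_mulVec] at this
      rw [this, hD2, hClapp, hht]
    -- difference satisfies homogeneous ODE
    have hqd : ∀ s ∈ Ici (0:ℝ), HasDerivWithinAt (fun r => p2 r - p r)
        (Cl (p2 s - p s)) (Ici 0) s := by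
      intro s hs
      have h2 : HasDerivWithinAt p2 (Cl (p2 s) + h s) (Ici 0) s := by
        have := hp2W s hs
        rwa [hode2 s hs] at this
      have := h2.sub (hpW s)
      rw [map_sub, ← add_sub_add_right_eq_sub (Cl (p2 s)) (Cl (p s)) (h s)]
      exact this
    have hq0 : p2 0 - p 0 = 0 := by rw [hp20, hp0, sub_self]
    have hzero := my_ode_unique Cl (fun r => p2 r - p r) hqd hq0 t ht
    have hpp : p2 t = p t := by
      have := sub_eq_zero.mp hzero
      exact this
    refine ⟨?_, hpp⟩
    rw [hu2eq t ht, hpp, hudef]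
end

section
/- Let T > 0, let X : [0,T] → ℝ be continuous and nonnegative, and let a, b : [0,T] → ℝ be nonnegative and monotone nondecreasing. Suppose that for every t ∈ [0,T] such that X(t) = max{X(s) : s ∈ [0,t]}, the inequality X(t)² ≤ X(0)² + a(t)·X(0) + b(t)·X(t) holds. Then X(t) ≤ X(0) + a(t) + b(t) for every t ∈ [0,T]. -/
/-!
At a running-maximum time `m` we have `X 0 ≤ X m`, so the quadratic inequality gives
`X m ^ 2 ≤ X m * (X 0 + a m + b m)`, i.e. the linear bound at `m`. For an arbitrary `t`, take `m`
to be a maximum point of `X` on `[0, t]`: it is a running maximum, `X t ≤ X m`, and `a`, `b`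
only grow from `m` to `t`.
-/

open Set

theorem le_add_add_of_sq_le_sq_add_mul_add_mul {x x₀ a b : ℝ} (hx₀ : 0 ≤ x₀) (hx : x₀ ≤ x)
    (ha : 0 ≤ a) (hb : 0 ≤ b) (h : x ^ 2 ≤ x₀ ^ 2 + a * x₀ + b * x) : x ≤ x₀ + a + b := by
  nlinarith [mul_nonneg hx₀ (sub_nonneg.2 hx), mul_nonneg ha (sub_nonneg.2 hx)]

theorem exists_runningMax_ge {α β : Type*} [ConditionallyCompleteLinearOrder α]
    [TopologicalSpace α] [OrderTopology α] [LinearOrder β] [TopologicalSpace β]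
    [OrderClosedTopology β] {X : α → β} {t₀ t : α} (ht : t₀ ≤ t)
    (hX : ContinuousOn X (Icc t₀ t)) :
    ∃ m ∈ Icc t₀ t, X t ≤ X m ∧ ∀ s ∈ Icc t₀ m, X s ≤ X m := by
  obtain ⟨m, hm, hmax⟩ := isCompact_Icc.exists_isMaxOn (nonempty_Icc.2 ht) hX
  exact ⟨m, hm, hmax (right_mem_Icc.2 ht),
    fun s hs => hmax (Icc_subset_Icc_right hm.2 hs)⟩

theorem maximum_point_bound_general
    (T : ℝ) (X a b : ℝ → ℝ)
    (hX : ContinuousOn X (Icc 0 T))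
    (hXnn : ∀ t ∈ Icc (0 : ℝ) T, 0 ≤ X t)
    (hann : ∀ t ∈ Icc (0 : ℝ) T, 0 ≤ a t)
    (hbnn : ∀ t ∈ Icc (0 : ℝ) T, 0 ≤ b t)
    (hamono : MonotoneOn a (Icc 0 T))
    (hbmono : MonotoneOn b (Icc 0 T))
    (hineq : ∀ t ∈ Icc (0 : ℝ) T, (∀ s ∈ Icc 0 t, X s ≤ X t) →
        X t ^ 2 ≤ X 0 ^ 2 + a t * X 0 + b t * X t) :
    ∀ t ∈ Icc (0 : ℝ) T, X t ≤ X 0 + a t + b t := by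
  intro t ht
  obtain ⟨m, hm, hXt, hrun⟩ := exists_runningMax_ge ht.1 (hX.mono (Icc_subset_Icc_right ht.2))
  have hmT : m ∈ Icc (0 : ℝ) T := ⟨hm.1, hm.2.trans ht.2⟩
  have h0T : (0 : ℝ) ∈ Icc 0 T := ⟨le_rfl, hm.1.trans hmT.2⟩
  calc X t ≤ X m := hXt
    _ ≤ X 0 + a m + b m :=
      le_add_add_of_sq_le_sq_add_mul_add_mul (hXnn 0 h0T) (hrun 0 (left_mem_Icc.2 hm.1))
        (hann m hmT) (hbnn m hmT) (hineq m hmT hrun)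
    _ ≤ X 0 + a t + b t :=
      add_le_add (add_le_add_right (hamono hmT ht hm.2) _) (hbmono hmT ht hm.2)

/-- **Maximum-point argument avoiding Grönwall's inequality.**
Let `T > 0`, `X : [0,T] → ℝ` continuous and nonnegative, and `a, b : [0,T] → ℝ`
nonnegative and monotone nondecreasing.  If for every `t ∈ [0,T]` with
`X t = max {X s : s ∈ [0,t]}` one has `X t ² ≤ X 0 ² + a t · X 0 + b t · X t`,
then `X t ≤ X 0 + a t + b t` for every `t ∈ [0,T]`. -/
theorem maximum_point_bound
    (T : ℝ) (hT : 0 < T) (X a b : ℝ → ℝ)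
    (hX : ContinuousOn X (Icc 0 T))
    (hXnn : ∀ t ∈ Icc (0 : ℝ) T, 0 ≤ X t)
    (hann : ∀ t ∈ Icc (0 : ℝ) T, 0 ≤ a t)
    (hbnn : ∀ t ∈ Icc (0 : ℝ) T, 0 ≤ b t)
    (hamono : MonotoneOn a (Icc 0 T))
    (hbmono : MonotoneOn b (Icc 0 T))
    (hineq : ∀ t ∈ Icc (0 : ℝ) T, (∀ s ∈ Icc 0 t, X s ≤ X t) →
        X t ^ 2 ≤ X 0 ^ 2 + a t * X 0 + b t * X t) :
    ∀ t ∈ Icc (0 : ℝ) T, X t ≤ X 0 + a t + b t :=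
  maximum_point_bound_general T X a b hX hXnn hann hbnn hamono hbmono hineq
end

section
/- Let V and Q be finite-dimensional real vector spaces, a_u and m, S symmetric bilinear forms on V and on Q respectively, a_p any bilinear form on Q, and b : V × Q → ℝ bilinear. Let e_u, ψ : ℝ → V and e_p, φ : ℝ → Q be differentiable. Assume that for all t ∈ ℝ: (i) a_u(e_u(t), v) − b(v, e_p(t) + φ(t)) = 0 for all v ∈ V; (ii) −b(e_u'(t) + ψ'(t), q) − S(e_p'(t) + φ'(t), q) − m(e_p'(t) + φ'(t), q) − a_p(e_p(t), q) = 0 for all q ∈ Q. Then for all t ∈ ℝ: (1/2)·d/dt[ a_u(e_u(t), e_u(t)) + m(e_p(t), e_p(t)) + S(e_p(t), e_p(t)) ] + a_p(e_p(t), e_p(t)) = b(e_u'(t), φ(t)) − b(ψ'(t), e_p(t)) − S(φ'(t), e_p(t)) − m(φ'(t), e_p(t)). -/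
section BilinearDeriv

variable {𝕜 E F G : Type*} [NontriviallyNormedField 𝕜] [CompleteSpace 𝕜]
  [NormedAddCommGroup E] [NormedSpace 𝕜 E] [FiniteDimensional 𝕜 E]
  [NormedAddCommGroup F] [NormedSpace 𝕜 F] [FiniteDimensional 𝕜 F]
  [NormedAddCommGroup G] [NormedSpace 𝕜 G]

theorem LinearMap.hasDerivAt_apply₂ (B : E →ₗ[𝕜] F →ₗ[𝕜] G) {f : 𝕜 → E} {g : 𝕜 → F}
    {f' : E} {g' : F} {t : 𝕜} (hf : HasDerivAt f f' t) (hg : HasDerivAt g g' t) :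
    HasDerivAt (fun s => B (f s) (g s)) (B f' (g t) + B (f t) g') t := by
  let Bc : E →L[𝕜] F →L[𝕜] G :=
    LinearMap.toContinuousLinearMap (LinearMap.toContinuousLinearMap.toLinearMap ∘ₗ B)
  exact (Bc.hasFDerivAt.comp_hasDerivAt t hf).clm_apply hg

theorem LinearMap.hasDerivAt_apply₂_self_of_symm (B : E →ₗ[𝕜] E →ₗ[𝕜] 𝕜)
    (hB : ∀ x y, B x y = B y x) {f : 𝕜 → E} {f' : E} {t : 𝕜} (hf : HasDerivAt f f' t) :
    HasDerivAt (fun s => B (f s) (f s)) (2 * B f' (f t)) t := by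
  refine (B.hasDerivAt_apply₂ hf hf).congr_deriv ?_
  rw [hB (f t), two_mul]

end BilinearDeriv

theorem energy_identity_general
    (V Q : Type*)
    [NormedAddCommGroup V] [NormedSpace ℝ V] [FiniteDimensional ℝ V]
    [NormedAddCommGroup Q] [NormedSpace ℝ Q] [FiniteDimensional ℝ Q]
    (au : V →ₗ[ℝ] V →ₗ[ℝ] ℝ) (hausym : ∀ x y : V, au x y = au y x)
    (m S ap : Q →ₗ[ℝ] Q →ₗ[ℝ] ℝ)
    (hmsym : ∀ x y : Q, m x y = m y x) (hSsym : ∀ x y : Q, S x y = S y x)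
    (b : V →ₗ[ℝ] Q →ₗ[ℝ] ℝ)
    (eu ψ : ℝ → V) (ep φ : ℝ → Q)
    (heu : Differentiable ℝ eu)
    (hep : Differentiable ℝ ep)
    (h1 : ∀ (t : ℝ) (v : V), au (eu t) v - b v (ep t + φ t) = 0)
    (h2 : ∀ (t : ℝ) (q : Q),
        -b (deriv eu t + deriv ψ t) q - S (deriv ep t + deriv φ t) q
          - m (deriv ep t + deriv φ t) q - ap (ep t) q = 0) :
    ∀ t : ℝ,
      (1 / 2) * deriv (fun s => au (eu s) (eu s) + m (ep s) (ep s) + S (ep s) (ep s)) t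
          + ap (ep t) (ep t)
        = b (deriv eu t) (φ t) - b (deriv ψ t) (ep t)
          - S (deriv φ t) (ep t) - m (deriv φ t) (ep t) := by
  intro t
  have hdu := (heu t).hasDerivAt
  have hdp := (hep t).hasDerivAt
  have henergy : deriv (fun s => au (eu s) (eu s) + m (ep s) (ep s) + S (ep s) (ep s)) t
      = 2 * au (deriv eu t) (eu t) + 2 * m (deriv ep t) (ep t)
        + 2 * S (deriv ep t) (ep t) :=
    ((au.hasDerivAt_apply₂_self_of_symm hausym hdu).add
      (m.hasDerivAt_apply₂_self_of_symm hmsym hdp)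
      |>.add (S.hasDerivAt_apply₂_self_of_symm hSsym hdp)).deriv
  -- test (i) with `v = e_u'(t)` and (ii) with `q = e_p(t)`
  have hu := h1 t (deriv eu t)
  have hp := h2 t (ep t)
  simp only [map_add, LinearMap.add_apply] at hu hp
  rw [henergy]
  linarith [hausym (eu t) (deriv eu t)]

/-- **Energy identity for the semidiscrete error equations.**
With symmetric bilinear forms `a_u` on `V` and `m, S` on `Q`, an arbitrary bilinear
`a_p` on `Q`, a coupling form `b : V × Q → ℝ`, and differentiable curves
`e_u, ψ : ℝ → V`, `e_p, φ : ℝ → Q` satisfying the error equations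
(i) `a_u(e_u(t), v) − b(v, e_p(t) + φ(t)) = 0` for all `v`, and
(ii) `−b(e_u'(t) + ψ'(t), q) − S(e_p'(t) + φ'(t), q) − m(e_p'(t) + φ'(t), q)
      − a_p(e_p(t), q) = 0` for all `q`,
one has for all `t`:
`(1/2) d/dt [a_u(e_u,e_u) + m(e_p,e_p) + S(e_p,e_p)] + a_p(e_p,e_p)
  = b(e_u', φ) − b(ψ', e_p) − S(φ', e_p) − m(φ', e_p)`. -/
theorem energy_identity
    (V Q : Type*)
    [NormedAddCommGroup V] [NormedSpace ℝ V] [FiniteDimensional ℝ V]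
    [NormedAddCommGroup Q] [NormedSpace ℝ Q] [FiniteDimensional ℝ Q]
    (au : V →ₗ[ℝ] V →ₗ[ℝ] ℝ) (hausym : ∀ x y : V, au x y = au y x)
    (m S ap : Q →ₗ[ℝ] Q →ₗ[ℝ] ℝ)
    (hmsym : ∀ x y : Q, m x y = m y x) (hSsym : ∀ x y : Q, S x y = S y x)
    (b : V →ₗ[ℝ] Q →ₗ[ℝ] ℝ)
    (eu ψ : ℝ → V) (ep φ : ℝ → Q)
    (heu : Differentiable ℝ eu) (hψ : Differentiable ℝ ψ)
    (hep : Differentiable ℝ ep) (hφ : Differentiable ℝ φ)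
    (h1 : ∀ (t : ℝ) (v : V), au (eu t) v - b v (ep t + φ t) = 0)
    (h2 : ∀ (t : ℝ) (q : Q),
        -b (deriv eu t + deriv ψ t) q - S (deriv ep t + deriv φ t) q
          - m (deriv ep t + deriv φ t) q - ap (ep t) q = 0) :
    ∀ t : ℝ,
      (1 / 2) * deriv (fun s => au (eu s) (eu s) + m (ep s) (ep s) + S (ep s) (ep s)) t
          + ap (ep t) (ep t)
        = b (deriv eu t) (φ t) - b (deriv ψ t) (ep t)
          - S (deriv φ t) (ep t) - m (deriv φ t) (ep t) :=
  energy_identity_general V Q au hausym m S ap hmsym hSsym b eu ψ ep φ heu hep h1 h2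
end
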